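/- arXiv:1411.2262 — 3 statements merged into one kernel-verified Lean document; each statement's English description precedes it below -/
import Mathlib

section
/- Let G be a graph, and let X, Y be disjoint sets of vertices, each of size k ≥ 1, with G[X] and G[Y] connected, and suppose the distance d(X,Y) between X and Y in G is positive and finite. Then there exist vertices u ∉ X and v ∈ X such that the set X' = (X ∪ {u}) \ {v} has size k, G[X'] is connected, and d(X', Y) < d(X, Y). -/
/-!
Pick a closest pair `x ∈ X`, `y ∈ Y` and let `u` be the second vertex of a shortest
`x`–`y` path. Then `u ∉ X`, `u` is strictly closer to `Y` than `X` is, and `G[X ∪ {u}]` is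
connected. A spanning tree of `G[X ∪ {u}]` has two leaves, so one leaf `v` differs from `u`;
removing `v` keeps the graph connected, and `X' = (X ∪ {u}) \ {v}` still contains `u`.
-/

/-- The (extended) distance between two finite vertex sets: the minimum over pairs of
the graph extended distance. -/
noncomputable def setEDist {V : Type*} (G : SimpleGraph V) (A B : Finset V) : ℕ∞ :=
  (A ×ˢ B).inf fun p => G.edist p.1 p.2

namespace SimpleGraph

variable {V : Type*} {G : SimpleGraph V}

lemma Connected.exists_ne_connected_induce_compl_singleton [Finite V] [Nontrivial V]
    (hconn : G.Connected) (u : V) : ∃ v ≠ u, (G.induce {v}ᶜ).Connected := by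
  obtain ⟨T, hTG, hT⟩ := hconn.exists_isTree_le
  have := Fintype.ofFinite V
  classical
  obtain ⟨a, b, hab, ha, hb⟩ := hT.exists_ne_and_degree_eq_one
  obtain ⟨v, hvu, hv⟩ : ∃ v ≠ u, T.degree v = 1 := by
    by_cases hau : a = u
    · exact ⟨b, fun hbu => hab (hau.trans hbu.symm), hb⟩
    · exact ⟨a, hau, ha⟩
  exact ⟨v, hvu, (hT.connected.induce_compl_singleton_of_degree_eq_one hv).mono (by tauto)⟩

lemma Connected.exists_ne_connected_induce_diff_singleton {s : Set V}
    (hconn : (G.induce s).Connected) (hfin : s.Finite) (hs : s.Nontrivial) {u : V} (hu : u ∈ s) :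
    ∃ v ∈ s, v ≠ u ∧ (G.induce (s \ {v})).Connected := by
  have := hfin.to_subtype
  have := hs.coe_sort
  obtain ⟨v, hvu, hv⟩ := hconn.exists_ne_connected_induce_compl_singleton ⟨u, hu⟩
  let f := induceHom (s := {v}ᶜ) (t := s \ {v.1}) (Embedding.induce (G := G) s).toHom
    (fun w hw => ⟨w.2, fun h => hw (Subtype.ext h)⟩)
  have hf : Function.Surjective f := fun w =>
    ⟨⟨⟨w.1, w.2.1⟩, fun h => w.2.2 (congrArg Subtype.val h)⟩, rfl⟩
  exact ⟨v, v.2, fun h => hvu (Subtype.ext h), hv.map f hf⟩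

lemma Connected.induce_insert_of_adj {s : Set V} (hconn : (G.induce s).Connected) {x u : V}
    (hx : x ∈ s) (hxu : G.Adj x u) : (G.induce (insert u s)).Connected := by
  have hunion := induce_union_connected hconn.preconnected
    (induce_pair_connected_of_adj hxu).preconnected ⟨x, hx, Set.mem_insert _ _⟩
  have hset : insert u s = s ∪ {x, u} := by
    ext w
    simp only [Set.mem_insert_iff, Set.mem_union, Set.mem_singleton_iff]
    grind
  rwa [hset]

lemma exists_adj_edist_lt {x y : V} (hpos : 0 < G.edist x y) (hfin : G.edist x y ≠ ⊤) :
    ∃ u, G.Adj x u ∧ G.edist u y < G.edist x y := by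
  obtain ⟨p, hp⟩ := exists_walk_of_edist_ne_top hfin
  cases p with
  | nil => simp at hpos
  | @cons _ u _ hadj q =>
    refine ⟨u, hadj, (edist_le q).trans_lt ?_⟩
    rw [← hp, Walk.length_cons, Nat.cast_lt]
    exact Nat.lt_succ_self _

end SimpleGraph

section

variable {V : Type*} {G : SimpleGraph V} {A B : Finset V}

lemma setEDist_le_edist {a b : V} (ha : a ∈ A) (hb : b ∈ B) : setEDist G A B ≤ G.edist a b :=
  Finset.inf_le (Finset.mem_product.mpr ⟨ha, hb⟩ : (a, b) ∈ A ×ˢ B)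

lemma exists_edist_eq_setEDist (hfin : setEDist G A B ≠ ⊤) :
    ∃ a ∈ A, ∃ b ∈ B, G.edist a b = setEDist G A B := by
  have hne : (A ×ˢ B).Nonempty := by
    by_contra h
    simp [setEDist, Finset.not_nonempty_iff_eq_empty.mp h] at hfin
  obtain ⟨⟨a, b⟩, hab, hmin⟩ :=
    Finset.exists_mem_eq_inf (A ×ˢ B) hne fun p => G.edist p.1 p.2
  obtain ⟨ha, hb⟩ := Finset.mem_product.mp hab
  exact ⟨a, ha, b, hb, hmin.symm⟩

end

theorem stmt_4_general {V : Type*} [DecidableEq V] (G : SimpleGraph V)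
    (X Y : Finset V) (k : ℕ)
    (hXcard : X.card = k)
    (hXconn : (G.induce (X : Set V)).Connected)
    (hpos : 0 < setEDist G X Y) (hfin : setEDist G X Y < ⊤) :
    ∃ u ∉ X, ∃ v ∈ X,
      ((insert u X).erase v).card = k ∧
      (G.induce (((insert u X).erase v : Finset V) : Set V)).Connected ∧
      setEDist G ((insert u X).erase v) Y < setEDist G X Y := by
  obtain ⟨x, hx, y, hy, hxy⟩ := exists_edist_eq_setEDist hfin.ne
  rw [← hxy] at hpos hfin ⊢
  obtain ⟨u, hxu, huy⟩ := G.exists_adj_edist_lt hpos hfin.ne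
  have huX : u ∉ X := fun hu => (hxy ▸ setEDist_le_edist hu hy).not_gt huy
  have hinsert := hXconn.induce_insert_of_adj hx hxu
  have hnontriv : (insert u (X : Set V)).Nontrivial :=
    ⟨u, Set.mem_insert _ _, x, Set.mem_insert_of_mem _ hx, hxu.ne'⟩
  obtain ⟨v, hv, hvu, hconn⟩ :=
    hinsert.exists_ne_connected_induce_diff_singleton (Set.toFinite _) hnontriv (Set.mem_insert _ _)
  have hvX : v ∈ X := (Set.mem_insert_iff.mp hv).resolve_left hvu
  refine ⟨u, huX, v, hvX, ?_, ?_, ?_⟩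
  · rw [Finset.card_erase_of_mem (Finset.mem_insert_of_mem hvX), Finset.card_insert_of_notMem huX,
      hXcard, Nat.add_sub_cancel]
  · rwa [Finset.coe_erase, Finset.coe_insert]
  · have huX' : u ∈ (insert u X).erase v :=
      Finset.mem_erase.mpr ⟨hvu.symm, Finset.mem_insert_self u X⟩
    exact (setEDist_le_edist huX' hy).trans_lt huy

theorem stmt_4 {V : Type*} [Fintype V] [DecidableEq V] (G : SimpleGraph V)
    (X Y : Finset V) (k : ℕ) (hk : 1 ≤ k)
    (hXcard : X.card = k) (hYcard : Y.card = k) (hdisj : Disjoint X Y)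
    (hXconn : (G.induce (X : Set V)).Connected)
    (hYconn : (G.induce (Y : Set V)).Connected)
    (hpos : 0 < setEDist G X Y) (hfin : setEDist G X Y < ⊤) :
    ∃ u ∉ X, ∃ v ∈ X,
      ((insert u X).erase v).card = k ∧
      (G.induce (((insert u X).erase v : Finset V) : Set V)).Connected ∧
      setEDist G ((insert u X).erase v) Y < setEDist G X Y :=
  stmt_4_general G X Y k hXcard hXconn hpos hfin
end

section
/- There exists a connected graph G with a linear order on its vertices (not a DFS order) and an integer k such that some X ∈ 𝒞(G;k) is not lexicographically smallest in 𝒞(G;k), yet every neighbor X' of X in the exchange supergraph satisfies X ≺ X'. Concretely: let G be the path on n = 2k+2 ≥ 6 vertices labelled, in path order, 1, 2, …, k, n, k+1, …, n−1, and let X = {k+1, …, 2k}; then both neighbors of X in the exchange supergraph are lexicographically larger than X. -/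
/-- Position of a label on the path: the path on `n = 2k+2` vertices visits the labels
`1, 2, …, k, n, k+1, …, n−1` in this order. -/
def pathPos (k l : ℕ) : ℕ :=
  if l ≤ k then l else if l = 2 * k + 2 then k + 1 else l + 1

/-- The path graph on vertex labels `1, …, n` (`n = 2k+2`), with edges between labels that
are consecutive in the path order `1, 2, …, k, n, k+1, …, n−1`. -/
def pathGraph' (k : ℕ) : SimpleGraph ℕ :=
  SimpleGraph.fromRel fun a b =>
    1 ≤ a ∧ a ≤ 2 * k + 2 ∧ 1 ≤ b ∧ b ≤ 2 * k + 2 ∧ pathPos k b = pathPos k a + 1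

/-- An integer interval of labels that are pairwise consecutively adjacent induces a
connected subgraph. -/
lemma induce_Icc_connected (G : SimpleGraph ℕ) (m n : ℕ) (hmn : m ≤ n)
    (h : ∀ i, m ≤ i → i < n → G.Adj i (i + 1)) :
    (G.induce ((Finset.Icc m n : Finset ℕ) : Set ℕ)).Connected := by
  rw [SimpleGraph.connected_iff]
  have hm : (m : ℕ) ∈ ((Finset.Icc m n : Finset ℕ) : Set ℕ) := by
    simp only [Finset.coe_Icc, Set.mem_Icc]; omega
  have key : ∀ x (h1 : m ≤ x) (h2 : x ≤ n),
      (G.induce ((Finset.Icc m n : Finset ℕ) : Set ℕ)).Reachable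
        ⟨m, hm⟩ ⟨x, by simp only [Finset.coe_Icc, Set.mem_Icc]; omega⟩ := by
    intro x h1
    induction x, h1 using Nat.le_induction with
    | base => intro _; rfl
    | succ x hx ih =>
      intro h2
      refine (ih (by omega)).trans (SimpleGraph.Adj.reachable ?_)
      exact h x hx (by omega)
  constructor
  · intro u v
    obtain ⟨u, hu⟩ := u
    obtain ⟨v, hv⟩ := v
    have hu' := hu; have hv' := hv
    simp only [Finset.coe_Icc, Set.mem_Icc] at hu' hv'
    exact (key u hu'.1 hu'.2).symm.trans (key v hv'.1 hv'.2)
  · exact ⟨⟨m, hm⟩⟩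

theorem stmt_13 (k : ℕ) (hk : 2 ≤ k) :
    (Finset.Icc (k + 1) (2 * k)).card = k ∧
    ((pathGraph' k).induce ((Finset.Icc (k + 1) (2 * k) : Finset ℕ) : Set ℕ)).Connected ∧
    -- `X` is not lexicographically smallest in `𝒞(G;k)`:
    (∃ Y : Finset ℕ, Y.card = k ∧ ((pathGraph' k).induce (Y : Set ℕ)).Connected ∧
      (Y \ Finset.Icc (k + 1) (2 * k)).min < (Finset.Icc (k + 1) (2 * k) \ Y).min) ∧
    -- yet every neighbor of `X` in the exchange supergraph is lexicographically larger:
    ∀ X' : Finset ℕ, X'.card = k → ((pathGraph' k).induce (X' : Set ℕ)).Connected →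
      (Finset.Icc (k + 1) (2 * k) ∩ X').card = k - 1 →
      (Finset.Icc (k + 1) (2 * k) \ X').min < (X' \ Finset.Icc (k + 1) (2 * k)).min := by
  refine ⟨?_, ?_, ?_, ?_⟩
  · rw [Nat.card_Icc]; omega
  · apply induce_Icc_connected _ _ _ (by omega)
    intro i h1 h2
    rw [pathGraph', SimpleGraph.fromRel_adj]
    refine ⟨by omega, Or.inl ⟨by omega, by omega, by omega, by omega, ?_⟩⟩
    simp only [pathPos]
    split_ifs <;> omega
  · refine ⟨Finset.Icc 1 k, by rw [Nat.card_Icc]; omega, ?_, ?_⟩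
    · apply induce_Icc_connected _ _ _ (by omega)
      intro i h1 h2
      rw [pathGraph', SimpleGraph.fromRel_adj]
      refine ⟨by omega, Or.inl ⟨by omega, by omega, by omega, by omega, ?_⟩⟩
      simp only [pathPos]
      split_ifs <;> omega
    · have h1 : (Finset.Icc 1 k \ Finset.Icc (k + 1) (2 * k)).min ≤ ((1 : ℕ) : WithTop ℕ) := by
        apply Finset.min_le
        simp only [Finset.mem_sdiff, Finset.mem_Icc]
        omega
      have h2 : ((k + 1 : ℕ) : WithTop ℕ) ≤ (Finset.Icc (k + 1) (2 * k) \ Finset.Icc 1 k).min := by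
        apply Finset.le_min
        intro c hc
        simp only [Finset.mem_sdiff, Finset.mem_Icc] at hc
        exact WithTop.coe_le_coe.mpr (by omega : k + 1 ≤ c)
      refine lt_of_le_of_lt h1 (lt_of_lt_of_le ?_ h2)
      exact_mod_cast (by omega : (1 : ℕ) < k + 1)
  · intro X' hcard hconn hcap
    set X := Finset.Icc (k + 1) (2 * k) with hXdef
    have hXcard : X.card = k := by rw [hXdef, Nat.card_Icc]; omega
    have hsd1 : (X \ X').card = 1 := by
      have := Finset.card_inter_add_card_sdiff X X'
      omega
    have hsd2 : (X' \ X).card = 1 := by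
      have := Finset.card_inter_add_card_sdiff X' X
      rw [Finset.inter_comm] at this
      omega
    obtain ⟨a, ha⟩ := Finset.card_eq_one.mp hsd1
    obtain ⟨b, hb⟩ := Finset.card_eq_one.mp hsd2
    have hamem : a ∈ X ∧ a ∉ X' := by
      have := Finset.mem_sdiff.mp (ha ▸ Finset.mem_singleton_self a)
      exact this
    have hbmem : b ∈ X' ∧ b ∉ X := by
      have := Finset.mem_sdiff.mp (hb ▸ Finset.mem_singleton_self b)
      exact this
    have haX : k + 1 ≤ a ∧ a ≤ 2 * k := Finset.mem_Icc.mp hamem.1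
    have hbX : ¬ (k + 1 ≤ b ∧ b ≤ 2 * k) := fun hc => hbmem.2 (Finset.mem_Icc.mpr hc)
    by_cases hbk : b ≤ k
    · -- contradiction: b is isolated in the induced graph on X'
      exfalso
      -- every element of X' other than b lies in X
      have hmemX : ∀ c ∈ X', c ≠ b → c ∈ X := by
        intro c hc hcb
        by_contra hcX
        have : c ∈ X' \ X := Finset.mem_sdiff.mpr ⟨hc, hcX⟩
        rw [hb, Finset.mem_singleton] at this
        exact hcb this
      -- b has no neighbor inside X
      have hiso : ∀ c ∈ X, ¬ (pathGraph' k).Adj b c := by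
        intro c hc hadj
        rw [Finset.mem_Icc] at hc
        rw [pathGraph', SimpleGraph.fromRel_adj] at hadj
        simp only [pathPos] at hadj
        obtain ⟨hne, h | h⟩ := hadj <;> (revert h; split_ifs <;> omega)
      -- pick an element of X ∩ X'
      have hne0 : (X ∩ X').Nonempty := by
        rw [← Finset.card_pos, hcap]; omega
      obtain ⟨c0, hc0⟩ := hne0
      have hc0X : c0 ∈ X := (Finset.mem_inter.mp hc0).1
      have hc0X' : c0 ∈ X' := (Finset.mem_inter.mp hc0).2
      have hc0b : c0 ≠ b := by
        have := Finset.mem_Icc.mp hc0X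
        omega
      have key : ∀ (u v : (X' : Set ℕ)), ((pathGraph' k).induce (X' : Set ℕ)).Walk u v →
          (u : ℕ) = b → (v : ℕ) ≠ b → False := by
        intro u v w
        induction w with
        | nil => intro h1 h2; exact h2 h1
        | @cons u' v' w' hadj p ih =>
          intro h1 h2
          have hG : (pathGraph' k).Adj (u' : ℕ) (v' : ℕ) := hadj
          rw [h1] at hG
          have hv' : (v' : ℕ) ∈ X' := v'.2
          by_cases hvb : (v' : ℕ) = b
          · rw [hvb] at hG; exact (pathGraph' k).irrefl hG
          · exact hiso _ (hmemX _ hv' hvb) hG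
      have hbS : (b : ℕ) ∈ (X' : Set ℕ) := hbmem.1
      have hcS : (c0 : ℕ) ∈ (X' : Set ℕ) := hc0X'
      obtain ⟨w⟩ := hconn.preconnected ⟨b, hbS⟩ ⟨c0, hcS⟩
      exact key _ _ w rfl hc0b
    · -- then b ≥ 2k+1 > a
      have hab : a < b := by omega
      rw [ha, hb, Finset.min_singleton, Finset.min_singleton]
      exact WithTop.coe_lt_coe.mpr hab
end

section
/- Let G be a connected graph on n vertices and 1 ≤ k ≤ n. Define the exchange supergraph 𝒢 on node set 𝒞(G;k) with edges between sets intersecting in k−1 elements. Then from any fixed node X₀ of 𝒢, every node of 𝒢 is reachable in 𝒢; in particular, a breadth-first search of 𝒢 started at X₀ visits all of 𝒞(G;k). -/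
/-!
Induct on `k`. A connected set of at least two vertices stays connected after deleting a
suitable vertex (a leaf of a spanning tree), so two connected `(k+1)`-sets contain connected
`k`-sets `A'`, `B'`, which are joined by a sequence of swaps. Carrying one extra vertex along
that sequence joins the `(k+1)`-sets, provided every swap `A ↦ A - x + y` takes place inside
the connected set `A + y`; so that stronger kind of swap is the one the induction produces.
-/

/-- The exchange supergraph on the family of `k`-element vertex sets inducing connected
subgraphs of `G`: two such sets are adjacent iff their intersection has `k - 1` elements. -/
def exchangeGraph {V : Type*} [DecidableEq V] (G : SimpleGraph V) (k : ℕ) :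
    SimpleGraph {X : Finset V // X.card = k ∧ (G.induce (X : Set V)).Connected} where
  Adj A B := A ≠ B ∧ (A.1 ∩ B.1).card = k - 1
  symm := ⟨by
    rintro A B ⟨h1, h2⟩
    exact ⟨h1.symm, by rwa [Finset.inter_comm]⟩⟩
  loopless := ⟨fun A h => h.1 rfl⟩

namespace SimpleGraph

variable {V : Type*} {G : SimpleGraph V}

abbrev InducesConnected (G : SimpleGraph V) (s : Finset V) : Prop :=
  (G.induce (s : Set V)).Connected

theorem InducesConnected.nonempty {s : Finset V} (hs : G.InducesConnected s) : s.Nonempty := by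
  obtain ⟨⟨v, hv⟩⟩ := Connected.nonempty hs
  exact ⟨v, hv⟩

theorem inducesConnected_singleton (v : V) : G.InducesConnected {v} := by
  rw [InducesConnected, Finset.coe_singleton]
  exact .of_subsingleton

theorem InducesConnected.union [DecidableEq V] {s t : Finset V} (hs : G.InducesConnected s)
    (ht : G.InducesConnected t) (hst : (s ∩ t).Nonempty) : G.InducesConnected (s ∪ t) := by
  rw [InducesConnected, Finset.coe_union]
  exact induce_union_connected hs.preconnected ht.preconnected (by exact_mod_cast hst)

theorem InducesConnected.exists_erase [DecidableEq V] {s : Finset V}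
    (hs : G.InducesConnected s) (h : s.Nontrivial) :
    ∃ a ∈ s, G.InducesConnected (s.erase a) := by
  have : Nontrivial (s : Set V) := Set.nontrivial_coe_sort.mpr h
  obtain ⟨v, hv⟩ := hs.exists_connected_induce_compl_singleton_of_finite_nontrivial
  refine ⟨v, v.2, ?_⟩
  let f : (G.induce (s : Set V)).induce {v}ᶜ →g G.induce (s.erase v : Set V) :=
    { toFun := fun x => ⟨x.1.1, Finset.mem_erase.mpr ⟨fun h => x.2 (Subtype.ext h), x.1.2⟩⟩
      map_rel' := id }
  refine hv.map f fun y => ?_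
  have hy : y.1 ∈ s.erase v := y.2
  exact ⟨⟨⟨y.1, Finset.mem_of_mem_erase hy⟩,
    fun h => Finset.ne_of_mem_erase hy (congrArg Subtype.val h)⟩, rfl⟩

variable [DecidableEq V]

def ConnectedSwap (G : SimpleGraph V) (A B : Finset V) : Prop :=
  ∃ x ∈ A, ∃ y ∉ A, B = insert y (A.erase x) ∧
    G.InducesConnected A ∧ G.InducesConnected B ∧ G.InducesConnected (insert y A)

theorem connectedSwap_singleton {u w : V} (h : G.Adj u w) : G.ConnectedSwap {u} {w} := by
  refine ⟨u, Finset.mem_singleton_self u, w, by simpa using h.ne.symm, by simp,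
    inducesConnected_singleton u, inducesConnected_singleton w, ?_⟩
  rw [InducesConnected, Finset.coe_insert, Finset.coe_singleton]
  exact induce_pair_connected_of_adj h.symm

theorem ConnectedSwap.card_eq {A B : Finset V} (h : G.ConnectedSwap A B) : B.card = A.card := by
  obtain ⟨x, hx, y, hy, rfl, -⟩ := h
  rw [Finset.card_insert_of_notMem (fun h => hy (Finset.mem_of_mem_erase h)),
    Finset.card_erase_add_one hx]

theorem ConnectedSwap.exchangeGraph_adj {k : ℕ} {A B : Finset V} (h : G.ConnectedSwap A B)
    (hA : A.card = k ∧ G.InducesConnected A) (hB : B.card = k ∧ G.InducesConnected B) :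
    (exchangeGraph G k).Adj ⟨A, hA⟩ ⟨B, hB⟩ := by
  obtain ⟨x, hx, y, hy, rfl, -⟩ := h
  refine ⟨fun hAB => hy ?_, ?_⟩
  · rw [Subtype.mk.injEq] at hAB
    exact hAB ▸ Finset.mem_insert_self y _
  · rw [Finset.inter_insert_of_notMem hy, Finset.inter_eq_right.mpr (Finset.erase_subset x A),
      Finset.card_erase_of_mem hx, hA.1]

theorem reflTransGen_connectedSwap_insert_insert {C : Finset V} {e y : V} (he : e ∉ C)
    (hy : y ∉ C) (hC : C.Nonempty) (hCe : G.InducesConnected (insert e C))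
    (hCy : G.InducesConnected (insert y C)) :
    Relation.ReflTransGen G.ConnectedSwap (insert e C) (insert y C) := by
  by_cases hey : e = y
  · rw [hey]
  refine .single ⟨e, Finset.mem_insert_self e C, y, by simp [hy, Ne.symm hey],
    by rw [Finset.erase_insert he], hCe, hCy, ?_⟩
  have hunion : insert y (insert e C) = insert e C ∪ insert y C := by
    ext; simp only [Finset.mem_insert, Finset.mem_union]; tauto
  rw [hunion]
  exact hCe.union hCy (hC.mono fun v hv => by simp [hv])

theorem ConnectedSwap.lift {A B : Finset V} {e : V} (h : G.ConnectedSwap A B) (he : e ∉ A)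
    (hAe : G.InducesConnected (insert e A)) :
    ∃ e' ∉ B, G.InducesConnected (insert e' B) ∧
      Relation.ReflTransGen G.ConnectedSwap (insert e A) (insert e' B) := by
  obtain ⟨x, hx, y, hy, rfl, hA, -, hAy⟩ := h
  have hxy : insert x (insert y (A.erase x)) = insert y A := by
    rw [Finset.insert_comm, Finset.insert_erase hx]
  refine ⟨x, by simp [ne_of_mem_of_not_mem hx hy], ?_, ?_⟩
  · rwa [hxy]
  · rw [hxy]
    exact reflTransGen_connectedSwap_insert_insert he hy hA.nonempty hAe hAy

theorem reflTransGen_connectedSwap_lift {A B : Finset V} {e : V}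
    (h : Relation.ReflTransGen G.ConnectedSwap A B) (he : e ∉ A)
    (hAe : G.InducesConnected (insert e A)) :
    ∃ e' ∉ B, G.InducesConnected (insert e' B) ∧
      Relation.ReflTransGen G.ConnectedSwap (insert e A) (insert e' B) := by
  induction h with
  | refl => exact ⟨e, he, hAe, .refl⟩
  | tail _ hstep ih =>
    obtain ⟨e₁, he₁, hCe₁, hAC⟩ := ih
    obtain ⟨e', he', hBe', hCB⟩ := hstep.lift he₁ hCe₁
    exact ⟨e', he', hBe', hAC.trans hCB⟩

theorem Connected.reflTransGen_connectedSwap (hG : G.Connected) {n : ℕ} {A B : Finset V}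
    (hA : A.card = n + 1) (hB : B.card = n + 1) (hAc : G.InducesConnected A)
    (hBc : G.InducesConnected B) : Relation.ReflTransGen G.ConnectedSwap A B := by
  induction n generalizing A B with
  | zero =>
    obtain ⟨u, rfl⟩ := Finset.card_eq_one.mp hA
    obtain ⟨v, rfl⟩ := Finset.card_eq_one.mp hB
    exact ((reachable_iff_reflTransGen u v).mp (hG u v)).lift _ fun _ _ => connectedSwap_singleton
  | succ n ih =>
    obtain ⟨a, ha, hA'⟩ := hAc.exists_erase (Finset.one_lt_card_iff_nontrivial.mp (by omega))
    obtain ⟨b, hb, hB'⟩ := hBc.exists_erase (Finset.one_lt_card_iff_nontrivial.mp (by omega))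
    have hA'B' := ih (by simp [Finset.card_erase_of_mem ha, hA])
      (by simp [Finset.card_erase_of_mem hb, hB]) hA' hB'
    obtain ⟨e, he, hB'e, hAB'e⟩ := reflTransGen_connectedSwap_lift hA'B'
      (Finset.notMem_erase a A) (by rwa [Finset.insert_erase ha])
    rw [Finset.insert_erase ha] at hAB'e
    refine hAB'e.trans ?_
    simpa only [Finset.insert_erase hb] using reflTransGen_connectedSwap_insert_insert he
      (Finset.notMem_erase b B) hB'.nonempty hB'e (by rwa [Finset.insert_erase hb])

theorem reachable_exchangeGraph_of_reflTransGen {k : ℕ}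
    {X : {X : Finset V // X.card = k ∧ (G.induce (X : Set V)).Connected}} {B : Finset V}
    (h : Relation.ReflTransGen G.ConnectedSwap X.1 B)
    (hB : B.card = k ∧ (G.induce (B : Set V)).Connected) :
    (exchangeGraph G k).Reachable X ⟨B, hB⟩ := by
  induction h with
  | refl => rfl
  | @tail C _ _ hstep ih =>
    have hC : G.InducesConnected C := by
      obtain ⟨-, -, -, -, -, hC, -⟩ := hstep
      exact hC
    have hC' : C.card = k ∧ G.InducesConnected C := ⟨hstep.card_eq ▸ hB.1, hC⟩
    exact (ih hC').trans (hstep.exchangeGraph_adj hC' hB).reachable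

end SimpleGraph

theorem stmt_18_general {V : Type*} [DecidableEq V] (G : SimpleGraph V)
    (hG : G.Connected) (k : ℕ)
    (X₀ X : {X : Finset V // X.card = k ∧ (G.induce (X : Set V)).Connected}) :
    (exchangeGraph G k).Reachable X₀ X := by
  obtain ⟨n, rfl⟩ : ∃ n, k = n + 1 := Nat.exists_eq_add_one.mpr <| by
    rw [← X₀.2.1]
    exact (SimpleGraph.InducesConnected.nonempty X₀.2.2).card_pos
  exact SimpleGraph.reachable_exchangeGraph_of_reflTransGen
    (hG.reflTransGen_connectedSwap X₀.2.1 X.2.1 X₀.2.2 X.2.2) X.2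

theorem stmt_18 {V : Type*} [Fintype V] [DecidableEq V] (G : SimpleGraph V)
    (hG : G.Connected) (k : ℕ) (hk : 1 ≤ k) (hkn : k ≤ Fintype.card V)
    (X₀ X : {X : Finset V // X.card = k ∧ (G.induce (X : Set V)).Connected}) :
    (exchangeGraph G k).Reachable X₀ X :=
  stmt_18_general G hG k X₀ X
end
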